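/- arXiv:2210.05054 — 2 statements merged into one kernel-verified Lean document; each statement's English description precedes it below -/
import Mathlib

section
/- Let π : X → Y be a factor map of G-systems with X ergodic, let (F_n) be a Følner sequence for G, let 0 < ε < 10^{-6}, and let P = {P_0, P_1} be a two-cell measurable partition of X such that L := sup_n cov(μ, P, F_n, ε | π) < ∞. For y ∈ Y define C_y := { (s, t) ∈ G × G : dist_{μ_y}(T^{-s}P, T^{-t}P) < 5√ε }, where T^{-s}P denotes the partition {T^{-s}P_0, T^{-s}P_1}. Then there is a constant c > 0 depending only on ε and L (one may take c = ((1 − 2√ε)·2^{−L})²) such that for every n there exists a set Y_n ⊆ Y with ν(Y_n) ≥ 1 − ε and |C_y ∩ (F_n × F_n)| / |F_n|² ≥ c for all y ∈ Y_n. -/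
open MeasureTheory Filter Set Topology
open scoped ENNReal Classical symmDiff

section SlowEntropyDefs

variable {G : Type*} [Group G]

/-- A measure-preserving action of a group `G` on a probability space. -/
structure IsMPSystem {X : Type*} [MeasurableSpace X] (T : G → X → X) (μ : Measure X) : Prop where
  prob : IsProbabilityMeasure μ
  meas : ∀ g, Measurable (T g)
  mp : ∀ g, MeasurePreserving (T g) μ μ
  mul : ∀ g g' x, T (g * g') x = T g (T g' x)
  one : ∀ x, T 1 x = x

/-- A factor map between measure-preserving `G`-systems. -/
structure IsFactorMap {X Y : Type*} [MeasurableSpace X] [MeasurableSpace Y]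
    (T : G → X → X) (μ : Measure X) (S : G → Y → Y) (ν : Measure Y) (π : X → Y) : Prop where
  meas : Measurable π
  map : μ.map π = ν
  equiv : ∀ g x, π (T g x) = S g (π x)

/-- An isomorphism of measure-preserving `G`-systems: a factor map with an a.e. two-sided
inverse factor map. -/
def IsIsomorphism {X Y : Type*} [MeasurableSpace X] [MeasurableSpace Y]
    (T : G → X → X) (μ : Measure X) (S : G → Y → Y) (ν : Measure Y) (π : X → Y) : Prop :=
  IsFactorMap T μ S ν π ∧ ∃ ρ : Y → X, IsFactorMap S ν T μ ρ ∧
    (∀ᵐ x ∂μ, ρ (π x) = x) ∧ (∀ᵐ y ∂ν, π (ρ y) = y)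

/-- `μy` is a disintegration of `μ` over the map `π : X → Y` (with `ν` the image of `μ`). -/
structure IsDisintegration {X Y : Type*} [MeasurableSpace X] [MeasurableSpace Y]
    (μ : Measure X) (ν : Measure Y) (π : X → Y) (μy : Y → Measure X) : Prop where
  prob : ∀ y, IsProbabilityMeasure (μy y)
  meas : ∀ s : Set X, MeasurableSet s → Measurable fun y => μy y s
  eq : ∀ s : Set X, MeasurableSet s → μ s = ∫⁻ y, μy y s ∂ν
  supp : ∀ᵐ y ∂ν, μy y (π ⁻¹' {y}) = 1

/-- A (left) Følner sequence for `G`: a sequence of nonempty finite subsets `F n ⊆ G` with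
`|gFₙ ∩ Fₙ| / |Fₙ| → 1` for every `g ∈ G`. -/
def IsFolner (F : ℕ → Finset G) : Prop :=
  (∀ n, (F n).Nonempty) ∧ ∀ g : G,
    Tendsto (fun n => ((((F n).image fun h => g * h) ∩ F n).card : ℝ) / ((F n).card : ℝ))
      atTop (nhds 1)

/-- The normalized Hamming distance `d_{P,F}` between the `(P,F)`-names of two points. -/
noncomputable def hamDist {X : Type*} (T : G → X → X) {r : ℕ} (P : X → Fin r)
    (F : Finset G) (x x' : X) : ℝ :=
  ((F.filter fun f => P (T f x) ≠ P (T f x')).card : ℝ) / (F.card : ℝ)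

/-- The set `E` has `d_{P,F}`-diameter at most `ε`. -/
def diamLE {X : Type*} (T : G → X → X) {r : ℕ} (P : X → Fin r) (F : Finset G)
    (E : Set X) (ε : ℝ) : Prop :=
  ∀ x ∈ E, ∀ x' ∈ E, hamDist T P F x x' ≤ ε

/-- The Hamming `ε`-covering number `cov(λ, P, F, ε)`: the smallest `M` such that there are
sets `E₁, …, E_M` of `d_{P,F}`-diameter at most `ε` whose union has `λ`-measure `≥ 1 - ε`. -/
noncomputable def hamCov {X : Type*} [MeasurableSpace X] (T : G → X → X) (lam : Measure X)
    {r : ℕ} (P : X → Fin r) (F : Finset G) (ε : ℝ) : ℕ :=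
  sInf {M : ℕ | ∃ E : Fin M → Set X, (∀ i, diamLE T P F (E i) ε) ∧
    ENNReal.ofReal (1 - ε) ≤ lam (⋃ i, E i)}

/-- The relative Hamming `ε`-covering number `cov(μ, P, F, ε | π)`, defined through the
disintegration `μy` of `μ` over `π` and the image measure `ν`: the smallest `M` such that
there exists `S ⊆ Y` with `ν S ≥ 1 - ε` and `cov(μ_y, P, F, ε) ≤ M` for every `y ∈ S`. -/
noncomputable def hamCovRel {X Y : Type*} [MeasurableSpace X] [MeasurableSpace Y]
    (T : G → X → X) (μy : Y → Measure X) (ν : Measure Y) {r : ℕ} (P : X → Fin r)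
    (F : Finset G) (ε : ℝ) : ℕ :=
  sInf {M : ℕ | ∃ S : Set Y, MeasurableSet S ∧ ENNReal.ofReal (1 - ε) ≤ ν S ∧
    ∀ y ∈ S, hamCov T (μy y) P F ε ≤ M}

/-- A rate function: an increasing positive function on `ℕ` tending to infinity. -/
def IsRateFunction (U : ℕ → ℝ) : Prop :=
  (∀ n, 0 < U n) ∧ Monotone U ∧ Tendsto U atTop atTop

/-- Relative slow entropy of a partition:
`sup_{ε>0} limsup_n cov(μ, P, F_n, ε | π) / U(|F_n|)`, valued in `[0,∞]`. -/
noncomputable def slowEntropyPartRel {X Y : Type*} [MeasurableSpace X] [MeasurableSpace Y]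
    (T : G → X → X) (μy : Y → Measure X) (ν : Measure Y) {r : ℕ} (P : X → Fin r)
    (U : ℕ → ℝ) (F : ℕ → Finset G) : ℝ≥0∞ :=
  ⨆ ε ∈ Ioi (0 : ℝ),
    Filter.limsup
      (fun n => ENNReal.ofReal ((hamCovRel T μy ν P (F n) ε : ℝ) / U (F n).card)) atTop

/-- Relative slow entropy: the supremum over all finite measurable partitions. -/
noncomputable def slowEntropyRel {X Y : Type*} [MeasurableSpace X] [MeasurableSpace Y]
    (T : G → X → X) (μy : Y → Measure X) (ν : Measure Y)
    (U : ℕ → ℝ) (F : ℕ → Finset G) : ℝ≥0∞ :=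
  ⨆ (r : ℕ) (P : X → Fin r) (_ : Measurable P), slowEntropyPartRel T μy ν P U F

/-- The partition distance `dist_λ(P, Q) = λ{x : P(x) ≠ Q(x)}` between two labeled
partitions indexed by the same set. -/
noncomputable def partDist {Z : Type*} [MeasurableSpace Z] (lam : Measure Z)
    {ι : Type*} (P Q : Z → ι) : ℝ≥0∞ :=
  lam {z | P z ≠ Q z}

/-- Ergodicity of a measure-preserving `G`-action. -/
def IsErgodicAction {X : Type*} [MeasurableSpace X] (T : G → X → X) (μ : Measure X) : Prop :=
  ∀ s : Set X, MeasurableSet s → (∀ g, T g ⁻¹' s = s) → μ s = 0 ∨ μ s = 1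

end SlowEntropyDefs

/-! Fix a fibre measure `λ = μ_y` with `cov(λ, P, F, ε) = M ≤ L`. The `M` covering sets are
replaced by disjoint measurable cells `D i`, each within Hamming distance `ε` of a reference
point `c i`. Counting pairs `(x, s)` for which the `s`-th symbol of `x` differs from that of its
reference point shows that these mismatch sets have average `λ`-measure at most `ε` over
`s ∈ F`, so by Markov's inequality at least `(1 - √ε)|F|` times `s` have mismatch at most `√ε`.
Pigeonholing these times on the colouring `s ↦ (P(T^s c i))ᵢ` gives a set `A` of at least
`(1 - √ε)|F| / 2^M` of them with a common colouring, and for `s, t ∈ A` the partitions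
`T^{-s}P` and `T^{-t}P` differ only off the cells or on a mismatch set, a set of measure at
most `ε + 2√ε < 5√ε`. Hence `A × A ⊆ C_y`. -/

open scoped Finset Function

theorem MeasureTheory.sum_measure_le_of_card_filter_mem_le {α ι : Type*} [MeasurableSpace α]
    (μ : Measure α) (s : Finset ι) {A : ι → Set α} (hA : ∀ i ∈ s, MeasurableSet (A i))
    {K : ℝ≥0∞} (hK : ∀ x, (#{i ∈ s | x ∈ A i} : ℝ≥0∞) ≤ K) :
    ∑ i ∈ s, μ (A i) ≤ K * μ univ :=
  calc ∑ i ∈ s, μ (A i) = ∑ i ∈ s, ∫⁻ x, (A i).indicator 1 x ∂μ :=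
        Finset.sum_congr rfl fun i hi => (lintegral_indicator_one (hA i hi)).symm
    _ = ∫⁻ x, ∑ i ∈ s, (A i).indicator 1 x ∂μ :=
        (lintegral_finsetSum s fun i hi => measurable_one.indicator (hA i hi)).symm
    _ = ∫⁻ x, (#{i ∈ s | x ∈ A i} : ℝ≥0∞) ∂μ := by
        simp only [indicator_apply, Pi.one_apply, Finset.sum_boole]
    _ ≤ ∫⁻ _, K ∂μ := lintegral_mono hK
    _ = K * μ univ := lintegral_const K

theorem Finset.one_sub_mul_card_le_card_filter_le {ι : Type*} {s : Finset ι} {f : ι → ℝ}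
    (hf : ∀ i ∈ s, 0 ≤ f i) {δ : ℝ} (hδ : 0 < δ) (hsum : ∑ i ∈ s, f i ≤ δ * δ * #s) :
    (1 - δ) * #s ≤ #{i ∈ s | f i ≤ δ} := by
  have hmarkov : δ * #{i ∈ s | δ < f i} ≤ δ * (δ * #s) :=
    calc δ * #{i ∈ s | δ < f i} ≤ ∑ i ∈ s with δ < f i, f i := by
          rw [mul_comm, ← nsmul_eq_mul]
          exact Finset.card_nsmul_le_sum _ _ _ fun i hi => (Finset.mem_filter.1 hi).2.le
      _ ≤ ∑ i ∈ s, f i :=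
          Finset.sum_le_sum_of_subset_of_nonneg (Finset.filter_subset _ _) fun i hi _ => hf i hi
      _ ≤ δ * (δ * #s) := by rwa [← mul_assoc]
  have hsplit := Finset.card_filter_add_card_filter_not (s := s) (fun i => f i ≤ δ)
  simp only [not_le] at hsplit
  have hcast : (#{i ∈ s | f i ≤ δ} : ℝ) + #{i ∈ s | δ < f i} = #s := by exact_mod_cast hsplit
  nlinarith [le_of_mul_le_mul_left hmarkov hδ]

section HammingCells

variable {G X ι : Type*} {T : G → X → X} {k : ℕ} {P : X → Fin k} {F : Finset G} {ε : ℝ}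
  {D : ι → Set X} {c : ι → X}

theorem measurable_hamDist_left [MeasurableSpace X] (hT : ∀ g, Measurable (T g))
    (hP : Measurable P) (x' : X) : Measurable fun x => hamDist T P F x x' := by
  unfold hamDist
  simp_rw [Finset.card_filter]
  push_cast
  refine .div_const (Finset.measurable_sum _ fun f _ => .ite ?_ measurable_const measurable_const) _
  exact ((hP.comp (hT f)) (measurableSet_singleton _)).compl

theorem card_filter_ne_le_of_hamDist_le {x x' : X} (h : hamDist T P F x x' ≤ ε) :
    (#{f ∈ F | P (T f x) ≠ P (T f x')} : ℝ) ≤ ε * #F := by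
  rcases F.eq_empty_or_nonempty with rfl | hF
  · simp
  · rwa [hamDist, div_le_iff₀ (by exact_mod_cast hF.card_pos)] at h

def refMismatch (T : G → X → X) (P : X → Fin k) (D : ι → Set X) (c : ι → X) (s : G) : Set X :=
  ⋃ i, D i ∩ {x | P (T s x) ≠ P (T s (c i))}

/-- The set `C_y ∩ (F × F)` of the paper, for `lam = μ_y` and `δ = 5√ε`. -/
noncomputable def closePairs [MeasurableSpace X] (lam : Measure X) (T : G → X → X) (P : X → Fin k)
    (F : Finset G) (δ : ℝ) : Finset (G × G) :=
  (F ×ˢ F).filter fun st =>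
    partDist lam (fun x => P (T st.1 x)) (fun x => P (T st.2 x)) < ENNReal.ofReal δ

theorem card_filter_mem_refMismatch_le (hdisj : Pairwise (Disjoint on D))
    (hc : ∀ i, ∀ x ∈ D i, hamDist T P F x (c i) ≤ ε) (hε : 0 ≤ ε) (x : X) :
    (#{s ∈ F | x ∈ refMismatch T P D c s} : ℝ) ≤ ε * #F := by
  by_cases hx : ∃ i, x ∈ D i
  · obtain ⟨i, hxi⟩ := hx
    refine le_trans ?_ (card_filter_ne_le_of_hamDist_le (hc i x hxi))
    gcongr with s _
    simp only [refMismatch, mem_iUnion, mem_inter_iff, mem_ofPred_eq]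
    rintro ⟨j, hxj, hne⟩
    obtain rfl : j = i := by
      by_contra hji
      exact Set.disjoint_left.1 (hdisj hji) hxj hxi
    exact hne
  · push Not at hx
    have hempty : {s ∈ F | x ∈ refMismatch T P D c s} = ∅ := by
      simp only [Finset.filter_eq_empty_iff, refMismatch, mem_iUnion, mem_inter_iff, not_exists,
        not_and]
      exact fun _ _ i hxi => absurd hxi (hx i)
    rw [hempty, Finset.card_empty, Nat.cast_zero]
    positivity

variable [MeasurableSpace X] {μ : Measure X}

theorem measurableSet_refMismatch [Countable ι] (hT : ∀ g, Measurable (T g)) (hP : Measurable P)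
    (hD : ∀ i, MeasurableSet (D i)) (s : G) : MeasurableSet (refMismatch T P D c s) :=
  .iUnion fun i => (hD i).inter ((hP.comp (hT s)) (measurableSet_singleton _)).compl

theorem sum_measureReal_refMismatch_le [IsProbabilityMeasure μ] [Countable ι]
    (hT : ∀ g, Measurable (T g)) (hP : Measurable P) (hD : ∀ i, MeasurableSet (D i))
    (hdisj : Pairwise (Disjoint on D)) (hc : ∀ i, ∀ x ∈ D i, hamDist T P F x (c i) ≤ ε)
    (hε : 0 ≤ ε) :
    ∑ s ∈ F, μ.real (refMismatch T P D c s) ≤ ε * #F := by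
  have hsum := sum_measure_le_of_card_filter_mem_le μ F
    (fun s _ => measurableSet_refMismatch (c := c) hT hP hD s) (K := ENNReal.ofReal (ε * #F))
    fun x => by
      rw [← ENNReal.ofReal_natCast]
      exact ENNReal.ofReal_le_ofReal (card_filter_mem_refMismatch_le hdisj hc hε x)
  rw [measure_univ, mul_one] at hsum
  rw [Finset.sum_congr rfl fun s _ => measureReal_def μ _,
    ← ENNReal.toReal_sum fun s _ => measure_ne_top μ _]
  exact ENNReal.toReal_le_of_le_ofReal (by positivity) hsum

theorem partDist_lt_of_measureReal_refMismatch_le [IsProbabilityMeasure μ] [Countable ι]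
    (hD : ∀ i, MeasurableSet (D i)) (hcov : ENNReal.ofReal (1 - ε) ≤ μ (⋃ i, D i))
    (hε0 : 0 < ε) (hε1 : ε ≤ 1) {s t : G}
    (hs : μ.real (refMismatch T P D c s) ≤ √ε) (ht : μ.real (refMismatch T P D c t) ≤ √ε)
    (hst : ∀ i, P (T s (c i)) = P (T t (c i))) :
    partDist μ (fun x => P (T s x)) (fun x => P (T t x)) < ENNReal.ofReal (5 * √ε) := by
  have hsub : {x | P (T s x) ≠ P (T t x)} ⊆
      (⋃ i, D i)ᶜ ∪ refMismatch T P D c s ∪ refMismatch T P D c t := by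
    intro x hx
    by_contra h
    simp only [refMismatch, mem_union, mem_compl_iff, mem_iUnion, mem_inter_iff, mem_ofPred_eq] at h
    push Not at h
    obtain ⟨⟨⟨i, hxi⟩, hxs⟩, hxt⟩ := h
    exact hx ((hxs i hxi).trans ((hst i).trans (hxt i hxi).symm))
  have hcompl : μ.real (⋃ i, D i)ᶜ ≤ ε := by
    rw [measureReal_compl (.iUnion hD), probReal_univ]
    have := (ENNReal.ofReal_le_iff_le_toReal (measure_ne_top μ _)).1 hcov
    rw [← measureReal_def] at this
    linarith
  have hsqrt : ε ≤ √ε := by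
    nlinarith [Real.mul_self_sqrt hε0.le, Real.sqrt_le_one.2 hε1, Real.sqrt_nonneg ε]
  calc partDist μ (fun x => P (T s x)) (fun x => P (T t x))
      = ENNReal.ofReal (μ.real {x | P (T s x) ≠ P (T t x)}) :=
        (ofReal_measureReal (measure_ne_top μ _)).symm
    _ ≤ ENNReal.ofReal (ε + √ε + √ε) := by
        refine ENNReal.ofReal_le_ofReal ((measureReal_mono hsub).trans ?_)
        grw [measureReal_union_le, measureReal_union_le, hcompl, hs, ht]
    _ < ENNReal.ofReal (5 * √ε) :=
        (ENNReal.ofReal_lt_ofReal_iff (by positivity)).2 (by nlinarith [Real.sqrt_pos.2 hε0])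

theorem sq_le_card_closePairs_of_refCells [IsProbabilityMeasure μ] [Fintype ι]
    (hT : ∀ g, Measurable (T g)) (hP : Measurable P) (hD : ∀ i, MeasurableSet (D i))
    (hdisj : Pairwise (Disjoint on D)) (hc : ∀ i, ∀ x ∈ D i, hamDist T P F x (c i) ≤ ε)
    (hcov : ENNReal.ofReal (1 - ε) ≤ μ (⋃ i, D i)) (hε0 : 0 < ε) (hε1 : ε ≤ 1) :
    ((1 - √ε) * #F / (k : ℝ) ^ Fintype.card ι) ^ 2 ≤ #(closePairs μ T P F (5 * √ε)) := by
  have : Nonempty (Fin k) := ⟨P (nonempty_of_isProbabilityMeasure μ).some⟩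
  set good := {s ∈ F | μ.real (refMismatch T P D c s) ≤ √ε}
  have hgood : (1 - √ε) * #F ≤ #good :=
    Finset.one_sub_mul_card_le_card_filter_le (fun _ _ => measureReal_nonneg)
      (Real.sqrt_pos.2 hε0) (by
        rw [Real.mul_self_sqrt hε0.le]
        exact sum_measureReal_refMismatch_le hT hP hD hdisj hc hε0.le)
  have hk : (0 : ℝ) < k ^ Fintype.card ι := by
    have : 0 < k := Fin.pos_iff_nonempty.2 ‹_›
    positivity
  obtain ⟨v, -, hv⟩ := Finset.exists_le_card_fiber_of_nsmul_le_card_of_maps_to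
    (f := fun s i => P (T s (c i))) (t := Finset.univ) (fun _ _ => Finset.mem_univ _)
    Finset.univ_nonempty (b := (#good : ℝ) / k ^ Fintype.card ι)
    (by
      rw [Finset.card_univ, Fintype.card_fun, Fintype.card_fin, nsmul_eq_mul]
      exact le_of_eq (by push_cast; field_simp))
  set A := {s ∈ good | (fun i => P (T s (c i))) = v}
  have hA : A ×ˢ A ⊆ closePairs μ T P F (5 * √ε) := by
    rintro ⟨s, t⟩ hst
    simp only [A, good, Finset.mem_product, Finset.mem_filter] at hst
    obtain ⟨⟨⟨hsF, hs⟩, hsv⟩, ⟨htF, ht⟩, htv⟩ := hst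
    exact Finset.mem_filter.2 ⟨Finset.mem_product.2 ⟨hsF, htF⟩,
      partDist_lt_of_measureReal_refMismatch_le hD hcov hε0 hε1 hs ht
        fun i => congrFun (hsv.trans htv.symm) i⟩
  have hsqrt : 0 ≤ 1 - √ε := by linarith [Real.sqrt_le_one.2 hε1]
  calc ((1 - √ε) * #F / (k : ℝ) ^ Fintype.card ι) ^ 2 ≤ (#A : ℝ) ^ 2 := by
        gcongr
        exact (div_le_div_of_nonneg_right hgood hk.le).trans hv
    _ = (#(A ×ˢ A) : ℝ) := by rw [Finset.card_product]; push_cast; ring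
    _ ≤ (#(closePairs μ T P F (5 * √ε)) : ℝ) := by exact_mod_cast Finset.card_le_card hA

end HammingCells

section Covers

variable {G X : Type*} [MeasurableSpace X] {T : G → X → X} {k : ℕ} {P : X → Fin k}
  {F : Finset G} {ε : ℝ}

theorem exists_refCells_of_diamLE [Nonempty X] (hT : ∀ g, Measurable (T g)) (hP : Measurable P)
    {M : ℕ} {E : Fin M → Set X} (hE : ∀ i, diamLE T P F (E i) ε) :
    ∃ (D : Fin M → Set X) (c : Fin M → X), (∀ i, MeasurableSet (D i)) ∧
      Pairwise (Disjoint on D) ∧ (∀ i, ∀ x ∈ D i, hamDist T P F x (c i) ≤ ε) ∧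
      ⋃ i, E i ⊆ ⋃ i, D i := by
  let c i : X := if h : (E i).Nonempty then h.some else Classical.arbitrary X
  let B i : Set X := {x | hamDist T P F x (c i) ≤ ε}
  have hB i : MeasurableSet (B i) :=
    measurableSet_le (measurable_hamDist_left hT hP _) measurable_const
  refine ⟨disjointed B, c, fun i => disjointedRec (fun _ j ht => ht.diff (hB j)) (hB i),
    disjoint_disjointed B, fun i x hx => disjointed_subset B i hx, ?_⟩
  rw [iUnion_disjointed]
  refine iUnion_mono fun i x hx => ?_
  have hne : (E i).Nonempty := ⟨x, hx⟩
  have hci : c i ∈ E i := by simp only [c, dif_pos hne]; exact hne.some_mem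
  exact hE i x hx (c i) hci

theorem exists_diamLE_cover_pow_card (lam : Measure X) [IsProbabilityMeasure lam] (hε : 0 ≤ ε) :
    ∃ E : Fin (k ^ #F) → Set X, (∀ i, diamLE T P F (E i) ε) ∧
      ENNReal.ofReal (1 - ε) ≤ lam (⋃ i, E i) := by
  let e : (F → Fin k) ≃ Fin (k ^ #F) := Fintype.equivFinOfCardEq (by simp)
  let name (x : X) : F → Fin k := fun f => P (T f x)
  refine ⟨fun i => {x | e (name x) = i}, fun i x hx x' hx' => ?_, ?_⟩
  · have hname : name x = name x' := e.injective (hx.trans hx'.symm)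
    have hempty : {f ∈ F | P (T f x) ≠ P (T f x')} = ∅ :=
      Finset.filter_eq_empty_iff.2 fun f hf => not_not.2 (congrFun hname ⟨f, hf⟩)
    simpa [hamDist, hempty] using hε
  · have hcover : ⋃ i, {x | e (name x) = i} = univ := iUnion_eq_univ_iff.2 fun x => ⟨_, rfl⟩
    rw [hcover, measure_univ]
    exact ENNReal.ofReal_le_one.2 (by linarith)

theorem hamCov_le_pow_card (lam : Measure X) [IsProbabilityMeasure lam] (hε : 0 ≤ ε) :
    hamCov T lam P F ε ≤ k ^ #F :=
  Nat.sInf_le (exists_diamLE_cover_pow_card lam hε)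

theorem exists_cover_of_hamCov (lam : Measure X) [IsProbabilityMeasure lam] (hε : 0 ≤ ε) :
    ∃ E : Fin (hamCov T lam P F ε) → Set X, (∀ i, diamLE T P F (E i) ε) ∧
      ENNReal.ofReal (1 - ε) ≤ lam (⋃ i, E i) := by
  unfold hamCov
  exact Nat.sInf_mem (s := {M | ∃ E : Fin M → Set X, (∀ i, diamLE T P F (E i) ε) ∧
    ENNReal.ofReal (1 - ε) ≤ lam (⋃ i, E i)}) ⟨_, exists_diamLE_cover_pow_card lam hε⟩

theorem exists_set_hamCov_le_hamCovRel {Y : Type*} [MeasurableSpace Y] {ν : Measure Y}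
    [IsProbabilityMeasure ν] {μy : Y → Measure X} [∀ y, IsProbabilityMeasure (μy y)]
    (hε : 0 ≤ ε) :
    ∃ S : Set Y, MeasurableSet S ∧ ENNReal.ofReal (1 - ε) ≤ ν S ∧
      ∀ y ∈ S, hamCov T (μy y) P F ε ≤ hamCovRel T μy ν P F ε := by
  unfold hamCovRel
  exact Nat.sInf_mem (s := {M | ∃ S : Set Y, MeasurableSet S ∧ ENNReal.ofReal (1 - ε) ≤ ν S ∧
    ∀ y ∈ S, hamCov T (μy y) P F ε ≤ M}) ⟨k ^ #F, univ, .univ, by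
    rw [measure_univ]; exact ENNReal.ofReal_le_one.2 (by linarith),
    fun y _ => hamCov_le_pow_card (μy y) hε⟩

theorem sq_div_pow_le_card_closePairs_div (lam : Measure X) [IsProbabilityMeasure lam]
    (hT : ∀ g, Measurable (T g)) (hP : Measurable P) (hF : F.Nonempty) (hε0 : 0 < ε)
    (hε1 : ε ≤ 1) {L : ℕ} (hL : hamCov T lam P F ε ≤ L) :
    ((1 - √ε) / (k : ℝ) ^ L) ^ 2 ≤ #(closePairs lam T P F (5 * √ε)) / (#F : ℝ) ^ 2 := by
  have := nonempty_of_isProbabilityMeasure lam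
  have hk : 1 ≤ k := Fin.pos_iff_nonempty.2 ⟨P (Classical.arbitrary X)⟩
  obtain ⟨E, hE, hEcov⟩ := exists_cover_of_hamCov (T := T) (P := P) (F := F) lam hε0.le
  obtain ⟨D, c, hD, hdisj, hc, hED⟩ := exists_refCells_of_diamLE hT hP hE
  have hbound := sq_le_card_closePairs_of_refCells hT hP hD hdisj hc
    (hEcov.trans (measure_mono hED)) hε0 hε1
  rw [Fintype.card_fin] at hbound
  have hFpos : (0 : ℝ) < #F := by exact_mod_cast hF.card_pos
  have hsqrt : 0 ≤ 1 - √ε := by linarith [Real.sqrt_le_one.2 hε1]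
  rw [le_div_iff₀ (by positivity)]
  calc ((1 - √ε) / (k : ℝ) ^ L) ^ 2 * (#F : ℝ) ^ 2 = ((1 - √ε) * #F / (k : ℝ) ^ L) ^ 2 := by ring
    _ ≤ ((1 - √ε) * #F / (k : ℝ) ^ hamCov T lam P F ε) ^ 2 := by
        gcongr
        exact_mod_cast hk
    _ ≤ _ := hbound

end Covers

theorem IsDisintegration.isProbabilityMeasure {X Y : Type*} [MeasurableSpace X]
    [MeasurableSpace Y] {μ : Measure X} {ν : Measure Y} {π : X → Y} {μy : Y → Measure X}
    [IsProbabilityMeasure μ] (h : IsDisintegration μ ν π μy) : IsProbabilityMeasure ν := by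
  have := h.prob
  have huniv := h.eq univ .univ
  simp only [measure_univ, lintegral_const, one_mul] at huniv
  exact ⟨huniv.symm⟩

theorem close_together_partition_general
    {G X Y : Type*} [Group G]
    [MeasurableSpace X] [MeasurableSpace Y]
    (T : G → X → X) (μ : Measure X) (ν : Measure Y)
    (hX : IsMPSystem T μ)
    (π : X → Y)
    (μy : Y → Measure X) (hdis : IsDisintegration μ ν π μy)
    (F : ℕ → Finset G) (hF : IsFolner F)
    (ε : ℝ) (hε0 : 0 < ε) (hε1 : ε < 10 ^ (-(6 : ℤ)))
    (P : X → Fin 2) (hP : Measurable P)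
    (L : ℕ) (hL : ∀ n, hamCovRel T μy ν P (F n) ε ≤ L) :
    ∃ c : ℝ, c = ((1 - 2 * Real.sqrt ε) * 2 ^ (-(L : ℝ))) ^ 2 ∧ 0 < c ∧
      ∀ n, ∃ Yn : Set Y, ENNReal.ofReal (1 - ε) ≤ ν Yn ∧
        ∀ y ∈ Yn,
          c ≤ (((F n ×ˢ F n).filter fun st : G × G =>
              partDist (μy y) (fun x => P (T st.1 x)) (fun x => P (T st.2 x)) <
                ENNReal.ofReal (5 * Real.sqrt ε)).card : ℝ) / ((F n).card : ℝ) ^ 2 := by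
  have := hX.prob
  have := hdis.prob
  have := hdis.isProbabilityMeasure
  have hε1' : ε ≤ 1 := hε1.le.trans (by norm_num)
  have hsqrt : √ε < 1 / 2 := by
    rw [Real.sqrt_lt' (by norm_num)]
    norm_num at hε1 ⊢
    linarith
  have hbase : 0 < 1 - 2 * √ε := by linarith
  have hrpow : (2 : ℝ) ^ (-(L : ℝ)) = ((2 : ℝ) ^ L)⁻¹ := by
    rw [Real.rpow_neg zero_le_two, Real.rpow_natCast]
  refine ⟨_, rfl, by positivity, fun n => ?_⟩
  obtain ⟨S, -, hS, hcov⟩ := exists_set_hamCov_le_hamCovRel (T := T) (P := P) (F := F n) (ν := ν)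
    (μy := μy) hε0.le
  refine ⟨S, hS, fun y hy => le_trans ?_ (sq_div_pow_le_card_closePairs_div (μy y) hX.meas hP
    (hF.1 n) hε0 hε1' ((hcov y hy).trans (hL n)))⟩
  rw [hrpow, ← div_eq_mul_inv, Nat.cast_ofNat]
  gcongr
  linarith [Real.sqrt_nonneg ε]

/-- Lemma `CloseTogetherPartition`.
Let `X` be ergodic, `π : X → Y` an extension, `(F_n)` a Følner sequence, `0 < ε < 10⁻⁶`,
and `P = {P_0, P_1}` a two-cell partition with `cov(μ, P, F_n, ε | π) ≤ L` for all `n`.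
With `C_y = {(s,t) : dist_{μ_y}(T⁻ˢP, T⁻ᵗP) < 5√ε}`, there is a constant
`c = ((1 − 2√ε)·2^{−L})² > 0` such that for every `n` there is `Y_n ⊆ Y` with
`ν(Y_n) ≥ 1 − ε` and `|C_y ∩ F_n²|/|F_n|² ≥ c` for all `y ∈ Y_n`. -/
theorem close_together_partition
    {G X Y : Type*} [Group G] [Countable G]
    [MeasurableSpace X] [MeasurableSpace Y] [StandardBorelSpace X] [StandardBorelSpace Y]
    (T : G → X → X) (μ : Measure X) (S : G → Y → Y) (ν : Measure Y)
    (hX : IsMPSystem T μ) (hY : IsMPSystem S ν) (hErg : IsErgodicAction T μ)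
    (π : X → Y) (hπ : IsFactorMap T μ S ν π)
    (μy : Y → Measure X) (hdis : IsDisintegration μ ν π μy)
    (F : ℕ → Finset G) (hF : IsFolner F)
    (ε : ℝ) (hε0 : 0 < ε) (hε1 : ε < 10 ^ (-(6 : ℤ)))
    (P : X → Fin 2) (hP : Measurable P)
    (L : ℕ) (hL : ∀ n, hamCovRel T μy ν P (F n) ε ≤ L) :
    ∃ c : ℝ, c = ((1 - 2 * Real.sqrt ε) * 2 ^ (-(L : ℝ))) ^ 2 ∧ 0 < c ∧
      ∀ n, ∃ Yn : Set Y, ENNReal.ofReal (1 - ε) ≤ ν Yn ∧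
        ∀ y ∈ Yn,
          c ≤ (((F n ×ˢ F n).filter fun st : G × G =>
              partDist (μy y) (fun x => P (T st.1 x)) (fun x => P (T st.2 x)) <
                ENNReal.ofReal (5 * Real.sqrt ε)).card : ℝ) / ((F n).card : ℝ) ^ 2 :=
  close_together_partition_general T μ ν hX π μy hdis F hF ε hε0 hε1 P hP L hL
end

section
/- Let G be a countable amenable group and let Γ ⊆ G have absolute density 1. Define Γ' = { (s, t) ∈ G × G : t s^{-1} ∈ Γ }. Then for every left Følner sequence (F_n) of G, |Γ' ∩ (F_n × F_n)| / |F_n|² → 1 as n → ∞. -/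
open MeasureTheory Filter Set Topology
open scoped ENNReal Classical symmDiff

/-- `Γ ⊆ G` has absolute density `1`: `|Γ ∩ F_n|/|F_n| → 1` for every left Følner
sequence `(F_n)`. -/
def HasAbsoluteDensityOne {G : Type*} [Group G] (Γ : Set G) : Prop :=
  ∀ F : ℕ → Finset G, IsFolner F →
    Tendsto (fun n => (((F n).filter fun h => h ∈ Γ).card : ℝ) / ((F n).card : ℝ))
      atTop (nhds 1)

/-- Lemma `DiagonalSetDensity`.
If `Γ ⊆ G` has absolute density `1` and `Γ' = {(s,t) : t s⁻¹ ∈ Γ}`, then for every left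
Følner sequence `(F_n)`, `|Γ' ∩ F_n²|/|F_n|² → 1`. -/
theorem diagonal_set_density
    {G : Type*} [Group G] [Countable G]
    (Γ : Set G) (hΓ : HasAbsoluteDensityOne Γ)
    (F : ℕ → Finset G) (hF : IsFolner F) :
    Tendsto
      (fun n => ((((F n) ×ˢ (F n)).filter fun st : G × G => st.2 * st.1⁻¹ ∈ Γ).card : ℝ) /
        ((F n).card : ℝ) ^ 2)
      atTop (nhds 1) := by
  obtain ⟨hne, hfol⟩ := hF
  set a : ℕ → ℝ := fun n =>
    ((((F n) ×ˢ (F n)).filter fun st : G × G => st.2 * st.1⁻¹ ∈ Γ).card : ℝ) /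
      ((F n).card : ℝ) ^ 2 with ha
  have hcardpos : ∀ n, (0:ℝ) < ((F n).card : ℝ) := fun n => by
    exact_mod_cast Finset.card_pos.2 (hne n)
  have hle1 : ∀ n, a n ≤ 1 := by
    intro n
    rw [ha]
    simp only
    rw [div_le_one (by positivity)]
    have h1 : ((((F n) ×ˢ (F n)).filter fun st : G × G => st.2 * st.1⁻¹ ∈ Γ).card : ℝ)
        ≤ ((F n ×ˢ F n).card : ℝ) := by exact_mod_cast Finset.card_filter_le _ _
    rw [Finset.card_product] at h1
    push_cast at h1
    nlinarith [h1]
  have hsum : ∀ n, (((F n) ×ˢ (F n)).filter fun st : G × G => st.2 * st.1⁻¹ ∈ Γ).card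
      = ∑ s ∈ F n, ((F n).filter fun t => t * s⁻¹ ∈ Γ).card := by
    intro n
    rw [Finset.card_filter, Finset.sum_product]
    exact Finset.sum_congr rfl fun s _ => (Finset.card_filter _ _).symm
  have key : ∀ n, ∃ s ∈ F n,
      (((F n).filter fun t => t * s⁻¹ ∈ Γ).card : ℝ) / ((F n).card : ℝ) ≤ a n := by
    intro n
    obtain ⟨s₀, hs₀, hmin⟩ := (F n).exists_min_image
      (fun s => ((F n).filter fun t => t * s⁻¹ ∈ Γ).card) (hne n)
    refine ⟨s₀, hs₀, ?_⟩
    have hlb : (F n).card * ((F n).filter fun t => t * s₀⁻¹ ∈ Γ).card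
        ≤ ∑ s ∈ F n, ((F n).filter fun t => t * s⁻¹ ∈ Γ).card := by
      calc (F n).card * ((F n).filter fun t => t * s₀⁻¹ ∈ Γ).card
          = ∑ _s ∈ F n, ((F n).filter fun t => t * s₀⁻¹ ∈ Γ).card := by
            rw [Finset.sum_const, smul_eq_mul]
        _ ≤ _ := Finset.sum_le_sum fun s hs => hmin s hs
    have h2 : ((F n).card : ℝ) * (((F n).filter fun t => t * s₀⁻¹ ∈ Γ).card : ℝ)
        ≤ ((((F n) ×ˢ (F n)).filter fun st : G × G => st.2 * st.1⁻¹ ∈ Γ).card : ℝ) := by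
      rw [hsum n]; exact_mod_cast hlb
    rw [ha]
    simp only
    rw [div_le_div_iff₀ (hcardpos n) (by positivity)]
    nlinarith [hcardpos n]
  rw [Metric.tendsto_atTop]
  intro ε hε
  by_contra hcon
  push_neg at hcon
  have hfreq : ∃ᶠ n in atTop, a n ≤ 1 - ε := by
    rw [Filter.frequently_atTop]
    intro N
    obtain ⟨n, hn, hdist⟩ := hcon N
    refine ⟨n, hn, ?_⟩
    have hd : dist (a n) 1 = 1 - a n := by
      rw [Real.dist_eq, abs_sub_comm, abs_of_nonneg (by linarith [hle1 n])]
    rw [hd] at hdist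
    linarith
  obtain ⟨φ, hφ, hφle⟩ := Filter.extraction_of_frequently_atTop hfreq
  choose s hsmem hsle using fun k => key (φ k)
  set E : ℕ → Finset G := fun k => (F (φ k)).image (fun t => t * (s k)⁻¹) with hE
  have hinj : ∀ k, Function.Injective (fun t : G => t * (s k)⁻¹) :=
    fun k => mul_left_injective _
  have hEcard : ∀ k, (E k).card = (F (φ k)).card := fun k =>
    Finset.card_image_of_injective _ (hinj k)
  have hEfol : IsFolner E := by
    constructor
    · intro k; exact (hne (φ k)).image _
    · intro g
      have hratio : ∀ k,
          ((((E k).image fun h => g * h) ∩ E k).card : ℝ) / ((E k).card : ℝ)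
          = ((((F (φ k)).image fun h => g * h) ∩ F (φ k)).card : ℝ) /
            ((F (φ k)).card : ℝ) := by
        intro k
        have himg : ((E k).image fun h => g * h)
            = (((F (φ k)).image fun h => g * h)).image (fun t => t * (s k)⁻¹) := by
          simp only [hE, Finset.image_image]
          congr 1
          ext t
          simp [Function.comp, mul_assoc]
        rw [himg]
        have hint : (((F (φ k)).image fun h => g * h)).image (fun t => t * (s k)⁻¹)
            ∩ E k
            = ((((F (φ k)).image fun h => g * h) ∩ F (φ k))).image
              (fun t => t * (s k)⁻¹) := by
          rw [hE]
          exact (Finset.image_inter _ _ (hinj k)).symm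
        rw [hint, Finset.card_image_of_injective _ (hinj k), hEcard]
      have := (hfol g).comp (hφ.tendsto_atTop)
      refine this.congr fun k => (hratio k).symm
  have hEten := hΓ E hEfol
  have hub : ∀ k, (((E k).filter fun h => h ∈ Γ).card : ℝ) / ((E k).card : ℝ) ≤ 1 - ε := by
    intro k
    have hfilt : (E k).filter (fun h => h ∈ Γ)
        = ((F (φ k)).filter fun t => t * (s k)⁻¹ ∈ Γ).image (fun t => t * (s k)⁻¹) := by
      ext x
      simp only [hE, Finset.mem_filter, Finset.mem_image]
      constructor
      · rintro ⟨⟨t, ht, rfl⟩, hx⟩; exact ⟨t, ⟨ht, hx⟩, rfl⟩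
      · rintro ⟨t, ⟨ht, hmem⟩, rfl⟩; exact ⟨⟨t, ht, rfl⟩, hmem⟩
    rw [hfilt, Finset.card_image_of_injective _ (hinj k), hEcard]
    exact (hsle k).trans (hφle k)
  have hcontr := le_of_tendsto hEten (Filter.Eventually.of_forall hub)
  linarith
end
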